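/- Let X = X₁ ⊕ ⋯ ⊕ Xₙ be a direct sum decomposition of the Hilbert 𝔄-module X whose submodules are pairwise orthogonal (⟨x,y⟩ = 0 for x ∈ Xᵢ, y ∈ Xⱼ, i ≠ j), and let Qᵢ : X → Xᵢ be the natural projections. Then the decomposition is small with respect to (‖·‖*ₙ): for all x₁,…,xₙ ∈ X, ‖Q₁x₁ + ⋯ + Qₙxₙ‖ ≤ ‖(x₁,…,xₙ)‖*ₙ. -/

import Mathlib

open scoped RightActions

/-- The December 2024 Mathlib `CStarModule` (right `A`-module via `Aᵐᵒᵖ`), whose meaning has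
since changed in Mathlib; restated here with its old definition. -/
class CStarModuleOld (A : outParam <| Type*) (E : Type*) [NonUnitalSemiring A] [StarRing A]
    [Module ℂ A] [AddCommGroup E] [Module ℂ E] [PartialOrder A] [SMul Aᵐᵒᵖ E] [Norm A] [Norm E]
    extends Inner A E where
  inner_add_right {x} {y} {z} : inner x (y + z) = inner x y + inner x z
  inner_self_nonneg {x} : 0 ≤ inner x x
  inner_self {x} : inner x x = 0 ↔ x = 0
  inner_op_smul_right {a : A} {x y : E} : inner x (y <• a) = inner x y * a
  inner_smul_right_complex {z : ℂ} {x} {y} : inner x (z • y) = z • inner x y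
  star_inner x y : star (inner x y) = inner y x
  norm_eq_sqrt_norm_inner_self x : ‖x‖ = Real.sqrt ‖inner x x‖

variable (A : Type*) {E : Type*} [NonUnitalCStarAlgebra A] [PartialOrder A] [StarOrderedRing A]
  [NormedAddCommGroup E] [Module ℂ E] [SMul Aᵐᵒᵖ E] [CStarModuleOld A E]

/-- `μ*ₙ(y₁,…,yₙ) = sup { ‖(Σᵢ |⟨yᵢ,z⟩|²)^{1/2}‖ : z ∈ X, ‖z‖ ≤ 1 }`. -/
noncomputable def mustar (n : ℕ) (y : Fin n → E) : ℝ :=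
  sSup {r : ℝ | ∃ z : E, ‖z‖ ≤ 1 ∧
    r = Real.sqrt ‖∑ i, star (inner A (y i) z : A) * (inner A (y i) z : A)‖}

/-- `‖x‖*ₙ = sup { ‖Σᵢ |⟨yᵢ,xᵢ⟩|²‖^{1/2} : μ*ₙ(y₁,…,yₙ) ≤ 1 }`. -/
noncomputable def starNorm (n : ℕ) (x : Fin n → E) : ℝ :=
  sSup {r : ℝ | ∃ y : Fin n → E, mustar A n y ≤ 1 ∧
    r = Real.sqrt ‖∑ i, star (inner A (y i) (x i) : A) * (inner A (y i) (x i) : A)‖}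

/-!
Put `s = ∑ i, Q i (x i)`. Orthogonality gives `Q i s = Q i (x i)` and `⟪s, s⟫ = ∑ i, pᵢ` with
`pᵢ = ⟪Q i s, Q i s⟫`. Test `‖x‖*ₙ` against `yᵢ = Q i s • cᵢ`, where `cᵢ = √pᵢ (pᵢ + ε)⁻¹` is given
by the continuous functional calculus: `‖yᵢ‖ ≤ 1` and `yᵢ` only sees the `i`-th component of a
vector, so `μ*ₙ(y) ≤ 1` by orthogonality, while `∑ i, |⟪yᵢ, xᵢ⟫|² = ∑ i, pᵢ cᵢ² pᵢ` lies within
`2nε` of `⟪s, s⟫`. Hence `‖s‖² ≤ (‖x‖*ₙ)² + 2nε` for every `ε > 0`.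
-/

section ApproxInvSqrt

variable {A}

lemma sqrt_div_add_mul_mul_sqrt_div_add {t ε : ℝ} (ht : 0 ≤ t) (hε : 0 < ε) :
    √t / (t + ε) * t * (√t / (t + ε)) = (t / (t + ε)) ^ 2 := by
  have hsq := Real.sq_sqrt ht
  field_simp
  rw [hsq]
  ring

lemma abs_sub_mul_div_add_sq_le {t ε : ℝ} (ht : 0 ≤ t) (hε : 0 < ε) :
    |t - t * (t / (t + ε)) ^ 2| ≤ 2 * ε := by
  set u := t / (t + ε)
  have hu0 : 0 ≤ u := by positivity
  have hu1 : u ≤ 1 := div_le_one_of_le₀ (by linarith) (by positivity)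
  have hgap : t * (1 - u) ≤ ε := by
    rw [show t * (1 - u) = ε * u by simp only [u]; field_simp; ring]
    nlinarith
  have hgap0 : 0 ≤ t * (1 - u) := mul_nonneg ht (sub_nonneg.2 hu1)
  rw [show t - t * u ^ 2 = t * (1 - u) * (1 + u) by ring, abs_of_nonneg (by positivity)]
  nlinarith

/-- `c = √p (p + ε)⁻¹` is a bounded substitute for `p^{-1/2}`, which need not exist in `A`. -/
lemma exists_approx_inv_sqrt {p : A} (hp : 0 ≤ p) {δ : ℝ} (hδ : 0 < δ) :
    ∃ c : A, IsSelfAdjoint c ∧ ‖c * p * c‖ ≤ 1 ∧ ‖p - p * c * (c * p)‖ ≤ δ := by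
  set ε := δ / 2 with hε_def
  have hε : 0 < ε := by positivity
  set h : ℝ → ℝ := fun t => √t / (t + ε) with h_def
  have hσ : ∀ t ∈ quasispectrum ℝ p, 0 ≤ t := quasispectrum_nonneg_of_nonneg p hp
  have hh : ContinuousOn h (quasispectrum ℝ p) :=
    ContinuousOn.div (by fun_prop) (by fun_prop) fun t ht => by linarith [hσ t ht]
  have hh0 : h 0 = 0 := by simp [h]
  have hcp : cfcₙ (fun t => h t * t) p = cfcₙ h p * p := by
    rw [cfcₙ_mul h (fun t => t) p hh hh0, cfcₙ_id' ℝ p]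
  have hpc : cfcₙ (fun t => t * h t) p = p * cfcₙ h p := by
    rw [cfcₙ_mul (fun t => t) h p (hg := hh) (hg0 := hh0), cfcₙ_id' ℝ p]
  have hht : ContinuousOn (fun t => h t * t) (quasispectrum ℝ p) := hh.mul continuousOn_id
  have hth : ContinuousOn (fun t => t * h t) (quasispectrum ℝ p) := continuousOn_id.mul hh
  refine ⟨cfcₙ h p, IsSelfAdjoint.cfcₙ, ?_, ?_⟩
  · rw [← hcp, ← cfcₙ_mul _ h p hht (by simp) hh hh0]
    refine norm_cfcₙ_le fun t ht => ?_
    have ht0 := hσ t ht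
    rw [h_def, sqrt_div_add_mul_mul_sqrt_div_add ht0 hε, norm_pow, Real.norm_eq_abs,
      abs_of_nonneg (by positivity)]
    exact pow_le_one₀ (by positivity) (div_le_one_of_le₀ (by linarith) (by positivity))
  · rw [← hcp, ← hpc, ← cfcₙ_mul _ _ p hth (by simp) hht (by simp)]
    nth_rewrite 1 [← cfcₙ_id' ℝ p]
    rw [← cfcₙ_sub _ _ p]
    refine norm_cfcₙ_le fun t ht => ?_
    rw [Real.norm_eq_abs, show t * h t * (h t * t) = t * (h t * t * h t) by ring, h_def,
      sqrt_div_add_mul_mul_sqrt_div_add (hσ t ht) hε]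
    linarith [abs_sub_mul_div_add_sq_le (hσ t ht) hε]

end ApproxInvSqrt

namespace CStarModuleOld

variable {A}

local notation "⟪" x ", " y "⟫" => inner A x y

section Algebraic

omit [StarOrderedRing A]

lemma inner_add_left {x y z : E} : ⟪x + y, z⟫ = ⟪x, z⟫ + ⟪y, z⟫ := by
  rw [← star_inner z, CStarModuleOld.inner_add_right, star_add, star_inner, star_inner]

variable (A) in
def innerRight (x : E) : E →+ A :=
  AddMonoidHom.mk' (inner A x) fun _ _ => CStarModuleOld.inner_add_right

variable (A) in
def innerLeft (y : E) : E →+ A :=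
  AddMonoidHom.mk' (fun x => ⟪x, y⟫) fun _ _ => inner_add_left

lemma inner_zero_right {x : E} : ⟪x, 0⟫ = 0 := map_zero (innerRight A x)

lemma inner_zero_left {x : E} : ⟪0, x⟫ = 0 := map_zero (innerLeft A x)

lemma inner_sub_right {x y z : E} : ⟪x, y - z⟫ = ⟪x, y⟫ - ⟪x, z⟫ := map_sub (innerRight A x) y z

lemma inner_sub_left {x y z : E} : ⟪x - y, z⟫ = ⟪x, z⟫ - ⟪y, z⟫ := map_sub (innerLeft A z) x y

lemma inner_sum_right {ι : Type*} {s : Finset ι} {x : E} {y : ι → E} :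
    ⟪x, ∑ i ∈ s, y i⟫ = ∑ i ∈ s, ⟪x, y i⟫ :=
  map_sum (innerRight A x) y s

lemma inner_sum_left {ι : Type*} {s : Finset ι} {x : ι → E} {y : E} :
    ⟪∑ i ∈ s, x i, y⟫ = ∑ i ∈ s, ⟪x i, y⟫ :=
  map_sum (innerLeft A y) x s

lemma inner_op_smul_left {a : A} {x y : E} : ⟪x <• a, y⟫ = star a * ⟪x, y⟫ := by
  rw [← star_inner y, CStarModuleOld.inner_op_smul_right, star_mul, star_inner]

lemma inner_smul_left_complex {z : ℂ} {x y : E} : ⟪z • x, y⟫ = star z • ⟪x, y⟫ := by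
  rw [← star_inner y, CStarModuleOld.inner_smul_right_complex, star_smul, star_inner]

lemma inner_smul_right_real {r : ℝ} {x y : E} : ⟪x, r • y⟫ = r • ⟪x, y⟫ := by
  rw [← Complex.coe_smul, CStarModuleOld.inner_smul_right_complex, Complex.coe_smul]

lemma inner_smul_left_real {r : ℝ} {x y : E} : ⟪r • x, y⟫ = r • ⟪x, y⟫ := by
  rw [← Complex.coe_smul, inner_smul_left_complex, Complex.star_def, Complex.conj_ofReal,
    Complex.coe_smul]

lemma isSelfAdjoint_inner_self {x : E} : IsSelfAdjoint ⟪x, x⟫ :=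
  star_inner _ _

lemma norm_sq_eq {x : E} : ‖x‖ ^ 2 = ‖⟪x, x⟫‖ := by
  rw [norm_eq_sqrt_norm_inner_self (A := A), Real.sq_sqrt (norm_nonneg _)]

lemma exists_norm_le_one_norm_inner_eq (y : E) : ∃ z : E, ‖z‖ ≤ 1 ∧ ‖⟪y, z⟫‖ = ‖y‖ := by
  rcases eq_or_ne y 0 with rfl | hy
  · exact ⟨0, by simp, by rw [inner_zero_right, norm_zero, norm_zero]⟩
  have hy : 0 < ‖y‖ := norm_pos_iff.2 hy
  refine ⟨(‖y‖⁻¹ : ℂ) • y, le_of_eq ?_, ?_⟩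
  · rw [norm_eq_sqrt_norm_inner_self (A := A), inner_smul_left_complex,
      CStarModuleOld.inner_smul_right_complex, smul_smul, norm_smul, ← norm_sq_eq, norm_mul,
      norm_star, ← sq, ← mul_pow, norm_inv, Complex.norm_real, norm_norm, inv_mul_cancel₀ hy.ne',
      one_pow, Real.sqrt_one]
  · rw [CStarModuleOld.inner_smul_right_complex, norm_smul, ← norm_sq_eq, norm_inv,
      Complex.norm_real, norm_norm]
    field_simp

end Algebraic

lemma inner_mul_inner_swap_le {x y : E} : ⟪y, x⟫ * ⟪x, y⟫ ≤ ‖x‖ ^ 2 • ⟪y, y⟫ := by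
  rcases eq_or_ne x 0 with rfl | hx
  · simp [inner_zero_left, inner_zero_right]
  have hnonneg : ∀ a : A, 0 ≤ ‖x‖ ^ 2 • (star a * a) - ‖x‖ ^ 2 • (star a * ⟪x, y⟫)
      - ‖x‖ ^ 2 • (⟪y, x⟫ * a) + ‖x‖ ^ 2 • (‖x‖ ^ 2 • ⟪y, y⟫) := fun a => by
    calc (0 : A) ≤ ⟪x <• a - ‖x‖ ^ 2 • y, x <• a - ‖x‖ ^ 2 • y⟫ := inner_self_nonneg
      _ = star a * ⟪x, x⟫ * a - ‖x‖ ^ 2 • (star a * ⟪x, y⟫)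
            - ‖x‖ ^ 2 • (⟪y, x⟫ * a) + ‖x‖ ^ 2 • (‖x‖ ^ 2 • ⟪y, y⟫) := by
        simp only [inner_sub_right, CStarModuleOld.inner_op_smul_right, inner_sub_left,
          inner_op_smul_left, inner_smul_left_real, inner_smul_right_real, sub_mul,
          smul_mul_assoc, smul_sub, mul_assoc]
        abel
      _ ≤ _ := by
        gcongr
        calc _ ≤ ‖⟪x, x⟫‖ • (star a * a) :=
              CStarAlgebra.star_left_conjugate_le_norm_smul (hb := isSelfAdjoint_inner_self)
          _ = ‖x‖ ^ 2 • (star a * a) := by rw [norm_sq_eq]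
  have := hnonneg ⟪x, y⟫
  simp only [star_inner, sub_self, zero_sub, le_neg_add_iff_add_le, add_zero] at this
  rwa [smul_le_smul_iff_of_pos_left (pow_pos (norm_pos_iff.2 hx) _)] at this

lemma norm_inner_le {x y : E} : ‖⟪x, y⟫‖ ≤ ‖x‖ * ‖y‖ := by
  refine (pow_le_pow_iff_left₀ (norm_nonneg _) (by positivity) two_ne_zero).1 ?_
  calc ‖⟪x, y⟫‖ ^ 2 = ‖⟪y, x⟫ * ⟪x, y⟫‖ := by
        rw [← star_inner x y, CStarRing.norm_star_mul_self, sq]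
    _ ≤ ‖‖x‖ ^ 2 • ⟪y, y⟫‖ := by
        refine CStarAlgebra.norm_le_norm_of_nonneg_of_le ?_ inner_mul_inner_swap_le
        rw [← star_inner x y]
        exact star_mul_self_nonneg _
    _ = (‖x‖ * ‖y‖) ^ 2 := by rw [norm_smul, ← norm_sq_eq, norm_pow, norm_norm, mul_pow]

lemma star_inner_mul_inner_le_of_norm_le_one {y : E} (hy : ‖y‖ ≤ 1) (x : E) :
    star ⟪y, x⟫ * ⟪y, x⟫ ≤ ⟪x, x⟫ := by
  rw [star_inner]
  refine inner_mul_inner_swap_le.trans (smul_le_of_le_one_left inner_self_nonneg ?_)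
  exact pow_le_one₀ (norm_nonneg _) hy

lemma exists_norm_op_smul_le_one_and_norm_sub_le (w : E) {δ : ℝ} (hδ : 0 < δ) :
    ∃ c : A, ‖w <• c‖ ≤ 1 ∧ ‖⟪w, w⟫ - star ⟪w <• c, w⟫ * ⟪w <• c, w⟫‖ ≤ δ := by
  obtain ⟨c, hc, hcpc, hpccp⟩ := exists_approx_inv_sqrt (inner_self_nonneg (A := A) (x := w)) hδ
  have hinner : ⟪w <• c, w⟫ = c * ⟪w, w⟫ := by rw [inner_op_smul_left, hc.star_eq]
  refine ⟨c, ?_, ?_⟩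
  · rw [norm_eq_sqrt_norm_inner_self (A := A), Real.sqrt_le_one,
      CStarModuleOld.inner_op_smul_right, hinner]
    exact hcpc
  · rw [star_inner, CStarModuleOld.inner_op_smul_right, hinner]
    exact hpccp

end CStarModuleOld

section StarNorm

open CStarModuleOld

variable {A}

local notation "⟪" x ", " y "⟫" => inner A x y

lemma norm_sum_star_mul_self_le {B ι : Type*} [NonUnitalNormedRing B] [StarRing B] [CStarRing B]
    (s : Finset ι) (b : ι → B) : ‖∑ i ∈ s, star (b i) * b i‖ ≤ ∑ i ∈ s, ‖b i‖ ^ 2 :=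
  (norm_sum_le _ _).trans_eq (Finset.sum_congr rfl fun i _ => by
    rw [CStarRing.norm_star_mul_self, sq])

lemma sq_norm_le_norm_sum_star_mul_self {ι : Type*} [Fintype ι] (b : ι → A) (i : ι) :
    ‖b i‖ ^ 2 ≤ ‖∑ j, star (b j) * b j‖ := by
  rw [sq, ← CStarRing.norm_star_mul_self]
  exact CStarAlgebra.norm_le_norm_of_nonneg_of_le (star_mul_self_nonneg _)
    (Finset.single_le_sum (fun j _ => star_mul_self_nonneg (b j)) (Finset.mem_univ i))

lemma norm_sum_star_inner_mul_inner_le {ι : Type*} (s : Finset ι) (y x : ι → E) :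
    ‖∑ i ∈ s, star ⟪y i, x i⟫ * ⟪y i, x i⟫‖ ≤ ∑ i ∈ s, (‖y i‖ * ‖x i‖) ^ 2 :=
  (norm_sum_star_mul_self_le s _).trans <| Finset.sum_le_sum fun _ _ => by
    gcongr
    exact norm_inner_le

lemma le_mustar {n : ℕ} (y : Fin n → E) {z : E} (hz : ‖z‖ ≤ 1) :
    √‖∑ i, star ⟪y i, z⟫ * ⟪y i, z⟫‖ ≤ mustar A n y := by
  refine le_csSup ⟨√(∑ i, ‖y i‖ ^ 2), ?_⟩ ⟨z, hz, rfl⟩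
  rintro r ⟨w, hw, rfl⟩
  refine Real.sqrt_le_sqrt <| (norm_sum_star_inner_mul_inner_le _ y fun _ => w).trans ?_
  gcongr with i
  exact mul_le_of_le_one_right (norm_nonneg _) hw

lemma norm_le_mustar {n : ℕ} (y : Fin n → E) (i : Fin n) : ‖y i‖ ≤ mustar A n y := by
  obtain ⟨z, hz, hyz⟩ := exists_norm_le_one_norm_inner_eq (A := A) (y i)
  refine le_trans ?_ (le_mustar y hz)
  rw [← hyz, ← Real.sqrt_sq (norm_nonneg _)]
  exact Real.sqrt_le_sqrt (sq_norm_le_norm_sum_star_mul_self (fun j => ⟪y j, z⟫) i)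

lemma mustar_le_one_of_sum_le {n : ℕ} {y : Fin n → E}
    (hy : ∀ z, ∑ i, star ⟪y i, z⟫ * ⟪y i, z⟫ ≤ ⟪z, z⟫) : mustar A n y ≤ 1 := by
  refine Real.sSup_le ?_ zero_le_one
  rintro r ⟨z, hz, rfl⟩
  calc √‖∑ i, star ⟪y i, z⟫ * ⟪y i, z⟫‖ ≤ √‖⟪z, z⟫‖ :=
        Real.sqrt_le_sqrt <| CStarAlgebra.norm_le_norm_of_nonneg_of_le
          (Finset.sum_nonneg fun i _ => star_mul_self_nonneg _) (hy z)
    _ = ‖z‖ := (norm_eq_sqrt_norm_inner_self z).symm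
    _ ≤ 1 := hz

lemma le_starNorm {n : ℕ} {y : Fin n → E} (hy : mustar A n y ≤ 1) (x : Fin n → E) :
    √‖∑ i, star ⟪y i, x i⟫ * ⟪y i, x i⟫‖ ≤ starNorm A n x := by
  refine le_csSup ⟨√(∑ i, ‖x i‖ ^ 2), ?_⟩ ⟨y, hy, rfl⟩
  rintro r ⟨y', hy', rfl⟩
  refine Real.sqrt_le_sqrt <| (norm_sum_star_inner_mul_inner_le _ y' x).trans ?_
  gcongr with i
  exact mul_le_of_le_one_left (norm_nonneg _) ((norm_le_mustar y' i).trans hy')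

omit [StarOrderedRing A] in
lemma starNorm_nonneg {n : ℕ} (x : Fin n → E) : 0 ≤ starNorm A n x :=
  Real.sSup_nonneg fun _ ⟨_, _, hr⟩ => hr ▸ Real.sqrt_nonneg _

end StarNorm

structure IsOrthogonalDecomposition {ι : Type*} [Fintype ι] (Y : ι → Submodule ℂ E)
    (Q : ι → E → E) : Prop where
  inner_eq_zero : ∀ i j, i ≠ j → ∀ x ∈ Y i, ∀ y ∈ Y j, inner A x y = 0
  mem : ∀ v i, Q i v ∈ Y i
  sum_eq : ∀ v, ∑ i, Q i v = v

namespace IsOrthogonalDecomposition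

open CStarModuleOld

variable {A} {ι : Type*} [Fintype ι] {Y : ι → Submodule ℂ E} {Q : ι → E → E}

local notation "⟪" x ", " y "⟫" => inner A x y

omit [StarOrderedRing A] in
lemma inner_sum_of_mem (hQ : IsOrthogonalDecomposition A Y Q) {f : ι → E} (hf : ∀ j, f j ∈ Y j)
    {i : ι} {u : E} (hu : u ∈ Y i) : ⟪u, ∑ j, f j⟫ = ⟪u, f i⟫ := by
  classical
  rw [inner_sum_right]
  exact Finset.sum_eq_single_of_mem i (Finset.mem_univ i)
    fun j _ hji => hQ.inner_eq_zero i j (Ne.symm hji) u hu (f j) (hf j)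

omit [StarOrderedRing A] in
lemma inner_eq_inner_apply (hQ : IsOrthogonalDecomposition A Y Q) {i : ι} {u : E} (hu : u ∈ Y i)
    (z : E) : ⟪u, z⟫ = ⟪u, Q i z⟫ := by
  conv_lhs => rw [← hQ.sum_eq z]
  exact hQ.inner_sum_of_mem (fun j => hQ.mem z j) hu

omit [StarOrderedRing A] in
/-- Orthogonality forces `Q i (∑ j, f j) - f i` to be orthogonal to itself. -/
lemma apply_sum_of_mem (hQ : IsOrthogonalDecomposition A Y Q) {f : ι → E} (hf : ∀ j, f j ∈ Y j)
    (i : ι) : Q i (∑ j, f j) = f i := by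
  set d := Q i (∑ j, f j) - f i
  have hd : d ∈ Y i := sub_mem (hQ.mem _ i) (hf i)
  have : ⟪d, d⟫ = 0 := by
    rw [CStarModuleOld.inner_sub_right, ← hQ.inner_eq_inner_apply hd, hQ.inner_sum_of_mem hf hd,
      sub_self]
  exact sub_eq_zero.1 (inner_self.1 this)

omit [StarOrderedRing A] in
lemma inner_self_eq_sum (hQ : IsOrthogonalDecomposition A Y Q) (z : E) :
    ⟪z, z⟫ = ∑ i, ⟪Q i z, Q i z⟫ := by
  nth_rewrite 1 [← hQ.sum_eq z]
  rw [inner_sum_left]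
  exact Finset.sum_congr rfl fun i _ => hQ.inner_eq_inner_apply (hQ.mem z i) z

lemma sum_star_inner_mul_inner_le (hQ : IsOrthogonalDecomposition A Y Q) {w : ι → E}
    (hw : ∀ i, w i ∈ Y i) {c : ι → A} (hc : ∀ i, ‖w i <• c i‖ ≤ 1) (z : E) :
    ∑ i, star ⟪w i <• c i, z⟫ * ⟪w i <• c i, z⟫ ≤ ⟪z, z⟫ := by
  rw [hQ.inner_self_eq_sum z]
  refine Finset.sum_le_sum fun i _ => ?_
  have hz : ⟪w i <• c i, z⟫ = ⟪w i <• c i, Q i z⟫ := by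
    rw [inner_op_smul_left, inner_op_smul_left, hQ.inner_eq_inner_apply (hw i)]
  rw [hz]
  exact star_inner_mul_inner_le_of_norm_le_one (hc i) _

lemma sq_norm_sum_apply_le {n : ℕ} {Y : Fin n → Submodule ℂ E} {Q : Fin n → E → E}
    (hQ : IsOrthogonalDecomposition A Y Q) (x : Fin n → E) {δ : ℝ} (hδ : 0 < δ) :
    ‖∑ i, Q i (x i)‖ ^ 2 ≤ starNorm A n x ^ 2 + n * δ := by
  set s := ∑ i, Q i (x i)
  have hQs : ∀ i, Q i s = Q i (x i) := hQ.apply_sum_of_mem fun i => hQ.mem (x i) i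
  choose c hc hcδ using fun i => exists_norm_op_smul_le_one_and_norm_sub_le (Q i s) hδ
  set y := fun i => Q i s <• c i
  have hy : mustar A n y ≤ 1 :=
    mustar_le_one_of_sum_le (hQ.sum_star_inner_mul_inner_le (fun i => hQ.mem s i) hc)
  have hyx : ∀ i, ⟪y i, x i⟫ = ⟪y i, Q i s⟫ := fun i => by
    rw [inner_op_smul_left, inner_op_smul_left, hQ.inner_eq_inner_apply (hQ.mem s i), hQs]
  set T := ∑ i, star ⟪y i, x i⟫ * ⟪y i, x i⟫
  have hT : ‖T‖ ≤ starNorm A n x ^ 2 :=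
    (Real.sqrt_le_left (starNorm_nonneg x)).1 (le_starNorm hy x)
  calc ‖s‖ ^ 2 = ‖⟪s, s⟫‖ := norm_sq_eq
    _ ≤ ‖T‖ + ‖⟪s, s⟫ - T‖ := norm_le_norm_add_norm_sub' _ _
    _ ≤ starNorm A n x ^ 2 + n * δ := by
      gcongr
      rw [hQ.inner_self_eq_sum, ← Finset.sum_sub_distrib]
      calc _ ≤ ∑ _i : Fin n, δ := norm_sum_le_of_le _ fun i _ => by rw [hyx]; exact hcδ i
        _ = n * δ := by simp

end IsOrthogonalDecomposition

theorem decomposition_small_starNorm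
    (n : ℕ) (Y : Fin n → Submodule ℂ E)
    (horth : ∀ i j, i ≠ j → ∀ x ∈ Y i, ∀ y ∈ Y j, (inner A x y : A) = 0)
    (Q : Fin n → E → E)
    (hQmem : ∀ v : E, ∀ i, Q i v ∈ Y i)
    (hQsum : ∀ v : E, ∑ i, Q i v = v)
    (x : Fin n → E) :
    ‖∑ i, Q i (x i)‖ ≤ starNorm A n x := by
  have hQ : IsOrthogonalDecomposition A Y Q := ⟨horth, hQmem, hQsum⟩
  refine (pow_le_pow_iff_left₀ (norm_nonneg _) (starNorm_nonneg x) two_ne_zero).1 ?_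
  refine le_of_forall_pos_le_add fun ε hε => ?_
  have hn : (0 : ℝ) < n + 1 := by positivity
  calc ‖∑ i, Q i (x i)‖ ^ 2 ≤ starNorm A n x ^ 2 + n * (ε / (n + 1)) :=
        hQ.sq_norm_sum_apply_le x (div_pos hε hn)
    _ ≤ starNorm A n x ^ 2 + ε := by
        gcongr
        rw [mul_div_assoc', div_le_iff₀ hn]
        linarith
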